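/- Let μ be a nonzero uniformly distributed measure on (ℍ^n, d_H) with supp(μ) ≠ ℍ^n, and fix x₀ ∈ supp(μ). For x ∈ ℝ^{2n+1} and s > 0, the integrals ∫ exp(-s·d_H(x,z)⁴) dμ(z) are finite, and the value of ∫ exp(-s·d_H(x,z)⁴) dμ(z) is the same for all x ∈ supp(μ); hence F(x,s) = ∫ (exp(-s·d_H(x,z)⁴) - exp(-s·d_H(x₀,z)⁴)) dμ(z) is well defined. Moreover, x ∈ supp(μ) if and only if F(x,s) = 0 for every s > 0; that is, supp(μ) = ⋂_{s>0} {x ∈ ℝ^{2n+1} : F(x,s) = 0}. -/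

import Mathlib

/-!
Comparing `μ` with the left-invariant Lebesgue measure, by computing the measure of
`{(z, w) : z ∈ B(x, R), d_H(z, w) ≤ 1}` under `μ ⊗ volume` in both orders, shows that
`μ`-balls grow at most polynomially in the radius; hence the integrals of
`exp (-s d_H(x, ·)⁴)` are finite.
By uniform distribution the law of `d_H(x, ·)` under `μ` is the same for every `x ∈ supp μ`, so
the integrals agree on the support. If `x ∉ supp μ`, some `B(x, r)` is `μ`-null, so the integral
centred at `x` is `O(exp (-s r⁴))`, while the one centred at `x₀` is at least
`exp (-s (r/2)⁴) μ(B(x₀, r/2))`; for large `s` they differ.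
-/

open MeasureTheory Set Filter ENNReal NNReal

noncomputable section

/-- The underlying space of the Heisenberg group `ℍⁿ = ℝ²ⁿ × ℝ`. -/
abbrev Heis (n : ℕ) := EuclideanSpace ℝ (Fin (2 * n)) × ℝ

/-- The symplectic form `A(x',y') = -2 ∑ (x_j y_{j+n} - x_{j+n} y_j)` on `ℝ²ⁿ`. -/
def symp {n : ℕ} (x y : EuclideanSpace ℝ (Fin (2 * n))) : ℝ :=
  -2 * ∑ j : Fin n,
    (x ⟨j.1, by have := j.isLt; omega⟩ * y ⟨j.1 + n, by have := j.isLt; omega⟩ -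
     x ⟨j.1 + n, by have := j.isLt; omega⟩ * y ⟨j.1, by have := j.isLt; omega⟩)

/-- The Heisenberg group multiplication. -/
def hmul {n : ℕ} (x y : Heis n) : Heis n := (x.1 + y.1, x.2 + y.2 + symp x.1 y.1)

/-- The Heisenberg group inverse, `x⁻¹ = -x`. -/
def hinv {n : ℕ} (x : Heis n) : Heis n := (-x.1, -x.2)

/-- The identity element `e = 0`. -/
def eH {n : ℕ} : Heis n := (0, 0)

/-- The Korányi norm `‖x‖_H = (|x'|⁴ + x_{2n+1}²)^{1/4}`. -/
def KNorm {n : ℕ} (x : Heis n) : ℝ := (‖x.1‖ ^ 4 + x.2 ^ 2) ^ ((1 : ℝ) / 4)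

/-- The Korányi metric `d_H(x,y) = ‖x⁻¹·y‖_H`. -/
def dH {n : ℕ} (x y : Heis n) : ℝ := KNorm (hmul (hinv x) y)

/-- The closed `d_H`-ball of center `x` and radius `r`. -/
def ballH {n : ℕ} (x : Heis n) (r : ℝ) : Set (Heis n) := {y | dH x y ≤ r}

/-- The support of a measure with respect to the Korányi metric. -/
def suppH {n : ℕ} (μ : Measure (Heis n)) : Set (Heis n) := {x | ∀ r > 0, 0 < μ (ballH x r)}

/-- A Radon measure is uniformly distributed if all balls centered on its support of
a common radius have the same measure. -/
def UniformlyDistributed {n : ℕ} (μ : Measure (Heis n)) : Prop :=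
  ∀ x ∈ suppH μ, ∀ y ∈ suppH μ, ∀ r : ℝ, 0 < r → μ (ballH x r) = μ (ballH y r)

/-- The dilations `δ_r(x', x_{2n+1}) = (r x', r² x_{2n+1})`. -/
def dil {n : ℕ} (r : ℝ) (x : Heis n) : Heis n := (r • x.1, r ^ 2 * x.2)

/-- `d_H`-diameter of a set, as an extended real. -/
def ediamH {n : ℕ} (E : Set (Heis n)) : ℝ≥0∞ :=
  ⨆ x ∈ E, ⨆ y ∈ E, ENNReal.ofReal (dH x y)

/-- The `s`-dimensional Hausdorff measure built from the Korányi metric `d_H`. -/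
def hausH {n : ℕ} (s : ℝ) (E : Set (Heis n)) : ℝ≥0∞ :=
  ⨆ (δ : ℝ) (_ : 0 < δ), ⨅ (t : ℕ → Set (Heis n)) (_ : E ⊆ ⋃ i, t i)
    (_ : ∀ i, ediamH (t i) ≤ ENNReal.ofReal δ), ∑' i, ediamH (t i) ^ s

/-- The Hausdorff dimension with respect to the Korányi metric `d_H`. -/
def dimHH {n : ℕ} (E : Set (Heis n)) : ℝ≥0∞ :=
  ⨆ (d : ℝ≥0) (_ : hausH (d : ℝ) E = ⊤), (d : ℝ≥0∞)

/-- `Θˢ(μ,x) = d`: the `s`-density of `μ` at `x` exists and equals `d`. -/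
def HasDensity {n : ℕ} (μ : Measure (Heis n)) (s : ℝ) (x : Heis n) (d : ℝ≥0∞) : Prop :=
  Tendsto (fun r : ℝ => μ (ballH x r) / ENNReal.ofReal (r ^ s)) (nhdsWithin 0 (Ioi 0)) (nhds d)

section

variable {n : ℕ}

lemma symp_add_left (x y z : EuclideanSpace ℝ (Fin (2 * n))) :
    symp (x + y) z = symp x z + symp y z := by
  simp only [symp, PiLp.add_apply, ← mul_add, ← Finset.sum_add_distrib]
  congr 1
  exact Finset.sum_congr rfl fun _ _ => by ring

lemma symp_neg_left (x y : EuclideanSpace ℝ (Fin (2 * n))) : symp (-x) y = -symp x y := by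
  simp only [symp, PiLp.neg_apply, ← mul_neg, ← Finset.sum_neg_distrib]
  congr 1
  exact Finset.sum_congr rfl fun _ _ => by ring

lemma symp_comm (x y : EuclideanSpace ℝ (Fin (2 * n))) : symp x y = -symp y x := by
  simp only [symp, ← mul_neg, ← Finset.sum_neg_distrib]
  congr 1
  exact Finset.sum_congr rfl fun _ _ => by ring

lemma symp_add_right (x y z : EuclideanSpace ℝ (Fin (2 * n))) :
    symp x (y + z) = symp x y + symp x z := by
  rw [symp_comm, symp_add_left, symp_comm y, symp_comm z]; ring

lemma symp_neg_right (x y : EuclideanSpace ℝ (Fin (2 * n))) : symp x (-y) = -symp x y := by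
  rw [symp_comm, symp_neg_left, symp_comm y, neg_neg]

lemma symp_self (x : EuclideanSpace ℝ (Fin (2 * n))) : symp x x = 0 := by
  linarith [symp_comm x x]

lemma abs_symp_le (x y : EuclideanSpace ℝ (Fin (2 * n))) :
    |symp x y| ≤ 4 * n * (‖x‖ * ‖y‖) := by
  have hcoord : ∀ i j, |x i * y j| ≤ ‖x‖ * ‖y‖ := fun i j => by
    rw [abs_mul]
    exact mul_le_mul (PiLp.norm_apply_le x i) (PiLp.norm_apply_le y j) (abs_nonneg _)
      (norm_nonneg _)
  calc |symp x y| ≤ 2 * ∑ _j : Fin n, (‖x‖ * ‖y‖ + ‖x‖ * ‖y‖) := by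
        rw [symp, abs_mul, abs_neg, abs_two]
        gcongr
        refine (Finset.abs_sum_le_sum_abs _ _).trans (Finset.sum_le_sum fun j _ => ?_)
        exact (abs_sub _ _).trans (add_le_add (hcoord _ _) (hcoord _ _))
    _ = 4 * n * (‖x‖ * ‖y‖) := by rw [Finset.sum_const, Finset.card_fin, nsmul_eq_mul]; ring

lemma hinv_hmul_cancel_left (x y : Heis n) : hmul (hinv x) (hmul x y) = y := by
  ext
  · simp [hmul, hinv]
  · simp only [hmul, hinv, symp_add_right, symp_neg_left, symp_self]; ring

lemma hmul_hinv_cancel_left (x y : Heis n) : hmul x (hmul (hinv x) y) = y := by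
  simpa [hinv] using hinv_hmul_cancel_left (hinv x) y

lemma hinv_hmul_hmul_hinv_hmul_cancel (x y z : Heis n) :
    hmul (hmul (hinv x) y) (hmul (hinv y) z) = hmul (hinv x) z := by
  ext
  · simp only [hmul, hinv, PiLp.add_apply, PiLp.neg_apply]; ring
  · simp only [hmul, hinv, symp_add_left, symp_add_right, symp_neg_left, symp_neg_right,
      symp_self]
    linarith [symp_comm y.1 x.1]

lemma hinv_hmul_hinv (x y : Heis n) : hinv (hmul (hinv x) y) = hmul (hinv y) x := by
  ext
  · simp only [hmul, hinv, PiLp.neg_apply, PiLp.add_apply]; ring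
  · simp only [hmul, hinv, symp_neg_left]
    linarith [symp_comm y.1 x.1]

lemma KNorm_nonneg (x : Heis n) : 0 ≤ KNorm x := by unfold KNorm; positivity

lemma KNorm_pow_four (x : Heis n) : KNorm x ^ 4 = ‖x.1‖ ^ 4 + x.2 ^ 2 := by
  rw [KNorm, ← Real.rpow_natCast, ← Real.rpow_mul (by positivity)]
  norm_num

lemma KNorm_le_iff (x : Heis n) {r : ℝ} (hr : 0 ≤ r) :
    KNorm x ≤ r ↔ ‖x.1‖ ^ 4 + x.2 ^ 2 ≤ r ^ 4 := by
  rw [← KNorm_pow_four, pow_le_pow_iff_left₀ (KNorm_nonneg x) hr four_ne_zero]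

lemma norm_fst_le_KNorm (x : Heis n) : ‖x.1‖ ≤ KNorm x := by
  rw [← pow_le_pow_iff_left₀ (norm_nonneg _) (KNorm_nonneg x) four_ne_zero, KNorm_pow_four]
  nlinarith [sq_nonneg x.2]

lemma abs_snd_le_KNorm_sq (x : Heis n) : |x.2| ≤ KNorm x ^ 2 := by
  rw [← pow_le_pow_iff_left₀ (abs_nonneg _) (by positivity) two_ne_zero, sq_abs, ← pow_mul,
    KNorm_pow_four]
  nlinarith [pow_nonneg (norm_nonneg x.1) 4]

lemma KNorm_le_of_le {x : Heis n} {c k : ℝ} (hc : 0 ≤ c) (hk : 0 ≤ k) (h₁ : ‖x.1‖ ≤ c)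
    (h₂ : |x.2| ≤ k * c ^ 2) : KNorm x ≤ (1 + k) * c := by
  rw [KNorm_le_iff x (by positivity)]
  have h₁' : ‖x.1‖ ^ 4 ≤ c ^ 4 := by gcongr
  have h₂' : x.2 ^ 2 ≤ (k * c ^ 2) ^ 2 := by rw [← sq_abs]; gcongr
  have hk' : 1 + k ^ 2 ≤ (1 + k) ^ 4 := by nlinarith [pow_nonneg hk 3, pow_nonneg hk 4]
  calc ‖x.1‖ ^ 4 + x.2 ^ 2 ≤ (1 + k ^ 2) * c ^ 4 := by nlinarith
    _ ≤ (1 + k) ^ 4 * c ^ 4 := by gcongr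
    _ = ((1 + k) * c) ^ 4 := by ring

lemma KNorm_hmul_le (x y : Heis n) :
    KNorm (hmul x y) ≤ (2 * n + 2) * (KNorm x + KNorm y) := by
  have ha := KNorm_nonneg x
  have hb := KNorm_nonneg y
  have hsymp : |symp x.1 y.1| ≤ 4 * n * (KNorm x * KNorm y) :=
    (abs_symp_le _ _).trans (by gcongr <;> exact norm_fst_le_KNorm _)
  have h₁ : ‖(hmul x y).1‖ ≤ KNorm x + KNorm y :=
    (norm_add_le _ _).trans (add_le_add (norm_fst_le_KNorm x) (norm_fst_le_KNorm y))
  have h₂ : |(hmul x y).2| ≤ (2 * n + 1) * (KNorm x + KNorm y) ^ 2 := by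
    calc |(hmul x y).2| ≤ |x.2| + |y.2| + |symp x.1 y.1| := abs_add_three _ _ _
      _ ≤ KNorm x ^ 2 + KNorm y ^ 2 + 4 * n * (KNorm x * KNorm y) := by
          gcongr <;> exact abs_snd_le_KNorm_sq _
      _ ≤ (2 * n + 1) * (KNorm x + KNorm y) ^ 2 := by nlinarith [mul_nonneg ha hb]
  have := KNorm_le_of_le (by positivity) (by positivity) h₁ h₂
  linarith

lemma KNorm_hinv (x : Heis n) : KNorm (hinv x) = KNorm x := by simp [KNorm, hinv]

lemma dH_nonneg (x y : Heis n) : 0 ≤ dH x y := KNorm_nonneg _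

lemma dH_comm (x y : Heis n) : dH x y = dH y x := by
  rw [dH, dH, ← hinv_hmul_hinv x y, KNorm_hinv]

lemma dH_self (x : Heis n) : dH x x = 0 := by
  have : hmul (hinv x) x = (0, 0) := by
    ext
    · simp [hmul, hinv]
    · simp [hmul, hinv, symp_neg_left, symp_self]
  simp [dH, this, KNorm]

lemma dH_le_mul_add (x y z : Heis n) : dH x z ≤ (2 * n + 2) * (dH x y + dH y z) := by
  rw [dH, ← hinv_hmul_hmul_hinv_hmul_cancel x y z]
  exact KNorm_hmul_le _ _

lemma dH_self_hmul (x u : Heis n) : dH x (hmul x u) = KNorm u := by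
  rw [dH, hinv_hmul_cancel_left]

lemma dH_eH (u : Heis n) : dH eH u = KNorm u := by
  simpa [eH, hmul, hinv, symp] using dH_self_hmul eH u

lemma continuous_hmul : Continuous (fun p : Heis n × Heis n => hmul p.1 p.2) := by
  unfold hmul symp; fun_prop

lemma continuous_KNorm : Continuous (KNorm : Heis n → ℝ) :=
  Continuous.rpow_const (by fun_prop) fun _ => Or.inr (by norm_num)

lemma continuous_dH : Continuous (fun p : Heis n × Heis n => dH p.1 p.2) :=
  continuous_KNorm.comp <| continuous_hmul.comp
    (show Continuous fun p : Heis n × Heis n => (hinv p.1, p.2) by unfold hinv; fun_prop)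

lemma continuous_dH_right (x : Heis n) : Continuous (dH x) := by
  have h := continuous_dH.comp (Continuous.prodMk_right (X := Heis n) x)
  exact h

lemma isClosed_ballH (x : Heis n) (r : ℝ) : IsClosed (ballH x r) :=
  isClosed_le (continuous_dH_right x) continuous_const

lemma measurableSet_ballH (x : Heis n) (r : ℝ) : MeasurableSet (ballH x r) :=
  (isClosed_ballH x r).measurableSet

lemma ballH_subset_ballH {x y : Heis n} {a b : ℝ} (h : dH x y ≤ a) :
    ballH y b ⊆ ballH x ((2 * n + 2) * (a + b)) :=
  fun _ hz => (dH_le_mul_add _ y _).trans (by gcongr; exact hz)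

lemma ballH_eH_subset_prod (r : ℝ) :
    ballH (eH : Heis n) r ⊆ Metric.closedBall 0 r ×ˢ Icc (-r ^ 2) (r ^ 2) := by
  intro z hz
  rw [ballH, mem_ofPred_eq, dH_eH] at hz
  refine ⟨by simpa using (norm_fst_le_KNorm z).trans hz, abs_le.1 ?_⟩
  exact (abs_snd_le_KNorm_sq z).trans (pow_le_pow_left₀ (KNorm_nonneg z) hz 2)

lemma ballH_eq_image (x : Heis n) (r : ℝ) : ballH x r = hmul x '' ballH eH r := by
  ext z
  simp only [ballH, mem_ofPred_eq, mem_image, dH_eH]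
  constructor
  · exact fun hz => ⟨hmul (hinv x) z, hz, hmul_hinv_cancel_left x z⟩
  · rintro ⟨u, hu, rfl⟩
    rwa [dH_self_hmul]

lemma isCompact_ballH (x : Heis n) (r : ℝ) : IsCompact (ballH x r) := by
  rw [ballH_eq_image]
  refine IsCompact.image ?_ (continuous_hmul.comp (continuous_const.prodMk continuous_id))
  exact ((isCompact_closedBall _ _).prod isCompact_Icc).of_isClosed_subset
    (isClosed_ballH _ _) (ballH_eH_subset_prod r)

lemma measurePreserving_hmul (z : Heis n) :
    MeasurePreserving (hmul z) (volume : Measure (Heis n)) volume := by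
  rw [Measure.volume_eq_prod]
  have hshear : ∀ a : EuclideanSpace ℝ (Fin (2 * n)),
      Measure.map (fun t : ℝ => z.2 + t + symp z.1 a) volume = volume := fun a => by
    simpa only [add_right_comm z.2] using
      (measurePreserving_add_left volume (z.2 + symp z.1 a)).map_eq
  exact (measurePreserving_add_left volume z.1).skew_product
    (g := fun a t => z.2 + t + symp z.1 a)
    (by unfold symp; fun_prop) (ae_of_all _ hshear)

lemma volume_ballH (x : Heis n) (r : ℝ) :
    volume (ballH x r) = volume (ballH (eH : Heis n) r) := by
  have : hmul x ⁻¹' ballH x r = ballH eH r := by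
    ext u
    simp only [ballH, mem_preimage, mem_ofPred_eq, dH_self_hmul, dH_eH]
  rw [← this,
    (measurePreserving_hmul x).measure_preimage (measurableSet_ballH x r).nullMeasurableSet]

lemma volume_ballH_le (x : Heis n) {r : ℝ} (hr : 0 ≤ r) :
    volume (ballH x r) ≤ ENNReal.ofReal (2 * r ^ (2 * n + 2)) *
      volume (Metric.ball (0 : EuclideanSpace ℝ (Fin (2 * n))) 1) := by
  rw [volume_ballH]
  refine (measure_mono (ballH_eH_subset_prod r)).trans (le_of_eq ?_)
  rw [Measure.volume_eq_prod, Measure.prod_prod, Measure.addHaar_closedBall _ _ hr,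
    Real.volume_Icc, finrank_euclideanSpace_fin, mul_right_comm,
    ← ENNReal.ofReal_mul (by positivity)]
  ring_nf

lemma volume_ballH_pos (x : Heis n) {r : ℝ} (hr : 0 < r) : 0 < volume (ballH x r) :=
  (isOpen_lt (continuous_dH_right x) continuous_const).measure_pos volume
    ⟨x, by simpa [dH_self] using hr⟩ |>.trans_le
      (measure_mono fun _ hz => le_of_lt (α := ℝ) hz)

section Support

variable {μ : Measure (Heis n)}

lemma notMem_suppH_iff {x : Heis n} : x ∉ suppH μ ↔ ∃ r > 0, μ (ballH x r) = 0 := by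
  simp [suppH, pos_iff_ne_zero]

lemma measure_compl_suppH : μ (suppH μ)ᶜ = 0 := by
  refine measure_null_of_locally_null _ fun x hx => ?_
  obtain ⟨r, hr, h0⟩ := notMem_suppH_iff.1 hx
  have hopen : IsOpen {y | dH x y < r} := isOpen_lt (continuous_dH_right x) continuous_const
  exact ⟨_, mem_nhdsWithin_of_mem_nhds (hopen.mem_nhds (by simpa [dH_self] using hr)),
    measure_mono_null (fun _ hy => le_of_lt (α := ℝ) hy) h0⟩

lemma measure_ballH_le_of_mem_suppH (hud : UniformlyDistributed μ) {x₀ : Heis n}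
    (hx₀ : x₀ ∈ suppH μ) (w : Heis n) {ρ : ℝ} (hρ : 0 < ρ) :
    μ (ballH w ρ) ≤ μ (ballH x₀ ((2 * n + 2) * (ρ + ρ))) := by
  by_cases h : ∃ y ∈ suppH μ, dH y w ≤ ρ
  · obtain ⟨y, hy, hyw⟩ := h
    rw [← hud y hy x₀ hx₀ _ (by positivity)]
    exact measure_mono (ballH_subset_ballH hyw)
  · push Not at h
    have hsub : ballH w ρ ⊆ (suppH μ)ᶜ := fun z hz hzs =>
      (h z hzs).not_ge (by rwa [dH_comm])
    simp [measure_mono_null hsub measure_compl_suppH]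

lemma measure_ballH_mul_volume_le [IsFiniteMeasureOnCompacts μ] (hud : UniformlyDistributed μ)
    {x₀ : Heis n} (hx₀ : x₀ ∈ suppH μ) (x : Heis n) (R : ℝ) {ρ : ℝ} (hρ : 0 < ρ) :
    μ (ballH x R) * volume (ballH (eH : Heis n) ρ) ≤
      volume (ballH (eH : Heis n) ((2 * n + 2) * (R + ρ))) *
        μ (ballH x₀ ((2 * n + 2) * (ρ + ρ))) := by
  set B := ballH x R
  set M := μ (ballH x₀ ((2 * n + 2) * (ρ + ρ)))
  set S := {p : Heis n × Heis n | dH p.1 p.2 ≤ ρ}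
  have hS : MeasurableSet S := (isClosed_le continuous_dH continuous_const).measurableSet
  have hslice : ∀ w, μ.restrict B ((fun z => (z, w)) ⁻¹' S) ≤
      (ballH x ((2 * n + 2) * (R + ρ))).indicator (fun _ => M) w := by
    intro w
    have hw : (fun z => (z, w)) ⁻¹' S = ballH w ρ := by
      ext z
      simp only [S, ballH, mem_preimage, mem_ofPred_eq, dH_comm z]
    rw [hw, Measure.restrict_apply (measurableSet_ballH _ _)]
    by_cases hwx : w ∈ ballH x ((2 * n + 2) * (R + ρ))
    · rw [indicator_of_mem hwx]
      exact (measure_mono inter_subset_left).trans (measure_ballH_le_of_mem_suppH hud hx₀ w hρ)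
    · rw [indicator_of_notMem hwx, nonpos_iff_eq_zero]
      refine measure_mono_null (fun z ⟨hzw, hzB⟩ => hwx ?_) measure_empty
      exact ballH_subset_ballH (a := R) hzB (by rwa [ballH, mem_ofPred_eq, dH_comm])
  calc μ B * volume (ballH (eH : Heis n) ρ)
        = ∫⁻ z in B, volume (Prod.mk z ⁻¹' S) ∂μ := by
        have hfiber : ∀ z, volume (Prod.mk z ⁻¹' S) = volume (ballH (eH : Heis n) ρ) :=
          fun z => volume_ballH z ρ
        simp only [hfiber, setLIntegral_const, mul_comm]
    _ = ∫⁻ w, μ.restrict B ((fun z => (z, w)) ⁻¹' S) := by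
        rw [← Measure.prod_apply hS, Measure.prod_apply_symm hS]
    _ ≤ ∫⁻ w, (ballH x ((2 * n + 2) * (R + ρ))).indicator (fun _ => M) w :=
        lintegral_mono hslice
    _ = volume (ballH (eH : Heis n) ((2 * n + 2) * (R + ρ))) * M := by
        rw [lintegral_indicator_const (measurableSet_ballH _ _), volume_ballH, mul_comm]

end Support

section Finiteness

variable {μ : Measure (Heis n)}

lemma exists_measure_ballH_le_pow [IsFiniteMeasureOnCompacts μ] (hud : UniformlyDistributed μ)
    {x₀ : Heis n} (hx₀ : x₀ ∈ suppH μ) (x : Heis n) :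
    ∃ A : ℝ≥0∞, A ≠ ⊤ ∧
      ∀ R : ℝ, 0 ≤ R → μ (ballH x R) ≤ A * ENNReal.ofReal ((R + 1) ^ (2 * n + 2)) := by
  set γ : ℝ := 2 * n + 2
  set V := volume (Metric.ball (0 : EuclideanSpace ℝ (Fin (2 * n))) 1)
  set c := volume (ballH (eH : Heis n) 1)
  set M := μ (ballH x₀ (γ * (1 + 1)))
  have hc₀ : c ≠ 0 := (volume_ballH_pos eH one_pos).ne'
  have hc : c ≠ ⊤ := (isCompact_ballH _ _).measure_lt_top.ne
  refine ⟨ENNReal.ofReal (2 * γ ^ (2 * n + 2)) * V * M / c, ?_, fun R hR => ?_⟩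
  · exact ENNReal.div_ne_top (ENNReal.mul_ne_top (ENNReal.mul_ne_top ENNReal.ofReal_ne_top
      measure_ball_lt_top.ne) (isCompact_ballH _ _).measure_lt_top.ne) hc₀
  have hpack := measure_ballH_mul_volume_le hud hx₀ x R one_pos
  rw [← ENNReal.le_div_iff_mul_le (Or.inl hc₀) (Or.inl hc)] at hpack
  refine hpack.trans ?_
  have hvol := volume_ballH_le (eH : Heis n) (r := γ * (R + 1)) (by positivity)
  rw [mul_pow, ← mul_assoc, ENNReal.ofReal_mul (by positivity)] at hvol
  calc volume (ballH eH (γ * (R + 1))) * M / c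
      ≤ ENNReal.ofReal (2 * γ ^ (2 * n + 2)) * ENNReal.ofReal ((R + 1) ^ (2 * n + 2)) * V * M
          / c := by gcongr
    _ = _ := by rw [mul_right_comm _ _ V, mul_right_comm _ _ M, ENNReal.mul_div_right_comm]

lemma lintegral_exp_le_tsum (μ : Measure (Heis n)) (x : Heis n) {s : ℝ} (hs : 0 ≤ s) :
    ∫⁻ z, ENNReal.ofReal (Real.exp (-s * dH x z ^ 4)) ∂μ ≤
      ∑' k : ℕ, ENNReal.ofReal (Real.exp (-s) ^ k) * μ (ballH x (k + 1)) := by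
  have hpt : ∀ z, ENNReal.ofReal (Real.exp (-s * dH x z ^ 4)) ≤
      ∑' k : ℕ, (ballH x (k + 1)).indicator
        (fun _ => ENNReal.ofReal (Real.exp (-s) ^ k)) z := by
    intro z
    set k := ⌊dH x z⌋₊
    have hk : (k : ℝ) ≤ dH x z ^ 4 := calc
      (k : ℝ) ≤ (k : ℝ) ^ 4 := by exact_mod_cast Nat.le_self_pow four_ne_zero k
      _ ≤ dH x z ^ 4 := by gcongr; exact Nat.floor_le (dH_nonneg x z)
    refine le_trans ?_ (ENNReal.le_tsum k)
    have hz : z ∈ ballH x (k + 1) := (Nat.lt_floor_add_one (dH x z)).le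
    rw [indicator_of_mem hz, ← Real.exp_nat_mul]
    exact ENNReal.ofReal_le_ofReal (Real.exp_le_exp.2 (by nlinarith))
  calc ∫⁻ z, ENNReal.ofReal (Real.exp (-s * dH x z ^ 4)) ∂μ
      ≤ ∫⁻ z, ∑' k : ℕ, (ballH x (k + 1)).indicator
          (fun _ => ENNReal.ofReal (Real.exp (-s) ^ k)) z ∂μ := lintegral_mono hpt
    _ = _ := by
        rw [lintegral_tsum fun k =>
          (measurable_const.indicator (measurableSet_ballH x _)).aemeasurable]
        simp only [lintegral_indicator_const (measurableSet_ballH x _)]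

lemma summable_add_two_pow_mul_geometric (m : ℕ) {r : ℝ} (hr₀ : 0 < r) (hr₁ : r < 1) :
    Summable fun k : ℕ => ((k : ℝ) + 2) ^ m * r ^ k := by
  have h := (summable_nat_add_iff (f := fun j : ℕ => (j : ℝ) ^ m * r ^ j) 2).2
    (summable_pow_mul_geometric_of_norm_lt_one m (by rwa [Real.norm_of_nonneg hr₀.le]))
  refine (h.mul_right (r ^ 2)⁻¹).congr fun k => ?_
  push_cast
  field_simp
  ring

lemma lintegral_exp_lt_top [IsFiniteMeasureOnCompacts μ] (hud : UniformlyDistributed μ)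
    {x₀ : Heis n} (hx₀ : x₀ ∈ suppH μ) (x : Heis n) {s : ℝ} (hs : 0 < s) :
    ∫⁻ z, ENNReal.ofReal (Real.exp (-s * dH x z ^ 4)) ∂μ < ⊤ := by
  obtain ⟨A, hA, hball⟩ := exists_measure_ballH_le_pow hud hx₀ x
  set r := Real.exp (-s)
  have hr₀ : 0 < r := Real.exp_pos _
  have hsum := summable_add_two_pow_mul_geometric (2 * n + 2) hr₀
    (Real.exp_lt_one_iff.2 (by linarith))
  calc ∫⁻ z, ENNReal.ofReal (Real.exp (-s * dH x z ^ 4)) ∂μ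
      ≤ ∑' k : ℕ, ENNReal.ofReal (r ^ k) * μ (ballH x (k + 1)) :=
        lintegral_exp_le_tsum μ x hs.le
    _ ≤ ∑' k : ℕ, A * ENNReal.ofReal (((k : ℝ) + 2) ^ (2 * n + 2) * r ^ k) := by
        refine ENNReal.tsum_le_tsum fun k => ?_
        calc ENNReal.ofReal (r ^ k) * μ (ballH x (k + 1))
            ≤ ENNReal.ofReal (r ^ k) * (A * ENNReal.ofReal ((k + 1 + 1) ^ (2 * n + 2))) := by
              gcongr
              exact hball _ (by positivity)
          _ = A * ENNReal.ofReal (((k : ℝ) + 2) ^ (2 * n + 2) * r ^ k) := by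
              rw [ENNReal.ofReal_mul (by positivity)]
              ring_nf
    _ = A * ENNReal.ofReal (∑' k : ℕ, ((k : ℝ) + 2) ^ (2 * n + 2) * r ^ k) := by
        rw [ENNReal.tsum_mul_left, ENNReal.ofReal_tsum_of_nonneg (fun k => by positivity) hsum]
    _ < ⊤ := ENNReal.mul_lt_top hA.lt_top ENNReal.ofReal_lt_top

lemma integrable_exp_dH [IsFiniteMeasureOnCompacts μ] (hud : UniformlyDistributed μ)
    {x₀ : Heis n} (hx₀ : x₀ ∈ suppH μ) (x : Heis n) {s : ℝ} (hs : 0 < s) :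
    Integrable (fun z => Real.exp (-s * dH x z ^ 4)) μ := by
  refine ⟨Continuous.aestronglyMeasurable (by have := continuous_dH_right x; fun_prop), ?_⟩
  rw [hasFiniteIntegral_iff_ofReal (ae_of_all _ fun _ => (Real.exp_pos _).le)]
  exact lintegral_exp_lt_top hud hx₀ x hs

end Finiteness

section Distribution

variable {μ : Measure (Heis n)} [IsFiniteMeasureOnCompacts μ]

lemma measure_ballH_zero_eq_iInf (x : Heis n) :
    μ (ballH x 0) = ⨅ k : ℕ, μ (ballH x (1 / (k + 1))) := by
  have hinter : ballH x 0 = ⋂ k : ℕ, ballH x (1 / (k + 1)) := by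
    ext z
    simp only [ballH, mem_iInter, mem_ofPred_eq]
    exact ⟨fun h k => h.trans (by positivity),
      fun h => ge_of_tendsto' tendsto_one_div_add_atTop_nhds_zero_nat h⟩
  rw [hinter, Antitone.measure_iInter]
  · exact fun i j hij z (hz : dH x z ≤ _) => hz.trans (Nat.one_div_le_one_div hij)
  · exact fun k => (measurableSet_ballH _ _).nullMeasurableSet
  · exact ⟨0, (isCompact_ballH _ _).measure_lt_top.ne⟩

lemma measure_ballH_eq_of_mem_suppH (hud : UniformlyDistributed μ) {x y : Heis n}
    (hx : x ∈ suppH μ) (hy : y ∈ suppH μ) (r : ℝ) : μ (ballH x r) = μ (ballH y r) := by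
  rcases lt_trichotomy r 0 with hr | rfl | hr
  · have hempty : ∀ z : Heis n, ballH z r = ∅ := fun z =>
      eq_empty_of_forall_notMem fun w hw => (dH_nonneg z w).not_gt (lt_of_le_of_lt hw hr)
    rw [hempty, hempty]
  · simp only [measure_ballH_zero_eq_iInf, hud x hx y hy _ Nat.one_div_pos_of_nat]
  · exact hud x hx y hy r hr

lemma map_dH_eq_of_mem_suppH (hud : UniformlyDistributed μ) {x y : Heis n}
    (hx : x ∈ suppH μ) (hy : y ∈ suppH μ) : μ.map (dH x) = μ.map (dH y) := by
  have hIoc : ∀ z : Heis n, ∀ a b, μ.map (dH z) (Ioc a b) = μ (ballH z b \ ballH z a) := by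
    intro z a b
    rw [Measure.map_apply (continuous_dH_right z).measurable measurableSet_Ioc]
    congr 1
    ext w
    simp [ballH, and_comm]
  have hdiff : ∀ z : Heis n, ∀ a b, a ≤ b →
      μ (ballH z b \ ballH z a) = μ (ballH z b) - μ (ballH z a) := fun z a b hab =>
    measure_sdiff (fun w hw => le_trans (α := ℝ) hw hab)
      (measurableSet_ballH z a).nullMeasurableSet (isCompact_ballH z a).measure_lt_top.ne
  refine Measure.ext_of_Ioc' _ _ (fun a b _ => ?_) (fun a b hab => ?_)
  · rw [hIoc]
    exact ((measure_mono sdiff_subset).trans_lt (isCompact_ballH x b).measure_lt_top).ne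
  · rw [hIoc, hIoc, hdiff x a b hab.le, hdiff y a b hab.le,
      measure_ballH_eq_of_mem_suppH hud hx hy a, measure_ballH_eq_of_mem_suppH hud hx hy b]

lemma integral_comp_dH_eq_of_mem_suppH (hud : UniformlyDistributed μ) {x y : Heis n}
    (hx : x ∈ suppH μ) (hy : y ∈ suppH μ) {f : ℝ → ℝ} (hf : Measurable f) :
    ∫ z, f (dH x z) ∂μ = ∫ z, f (dH y z) ∂μ := by
  rw [← integral_map (continuous_dH_right x).aemeasurable hf.aestronglyMeasurable,
    ← integral_map (continuous_dH_right y).aemeasurable hf.aestronglyMeasurable,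
    map_dH_eq_of_mem_suppH hud hx hy]

end Distribution

section Separation

variable {μ : Measure (Heis n)}

lemma integral_exp_le_of_measure_ballH_eq_zero {x : Heis n} {r s : ℝ} (hr : 0 ≤ r)
    (hs : 1 ≤ s) (h₀ : μ (ballH x r) = 0)
    (hint : Integrable (fun z => Real.exp (-dH x z ^ 4)) μ) :
    ∫ z, Real.exp (-s * dH x z ^ 4) ∂μ ≤
      Real.exp (-(s - 1) * r ^ 4) * ∫ z, Real.exp (-dH x z ^ 4) ∂μ := by
  have hfar : ∀ᵐ z ∂μ, r < dH x z := by
    filter_upwards [measure_eq_zero_iff_ae_notMem.1 h₀] with z hz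
    exact lt_of_not_ge hz
  rw [← integral_const_mul]
  refine integral_mono_of_nonneg (ae_of_all _ fun _ => (Real.exp_pos _).le) (hint.const_mul _) ?_
  filter_upwards [hfar] with z hz
  rw [← Real.exp_add]
  have : r ^ 4 ≤ dH x z ^ 4 := by gcongr
  exact Real.exp_le_exp.2 (by nlinarith)

lemma exp_mul_measure_ballH_le_integral {x₀ : Heis n} {ρ s : ℝ} (hs : 0 ≤ s)
    (hfin : μ (ballH x₀ ρ) ≠ ⊤)
    (hint : Integrable (fun z => Real.exp (-s * dH x₀ z ^ 4)) μ) :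
    Real.exp (-s * ρ ^ 4) * (μ (ballH x₀ ρ)).toReal ≤
      ∫ z, Real.exp (-s * dH x₀ z ^ 4) ∂μ := by
  refine (setIntegral_ge_of_const_le_real (measurableSet_ballH _ _) hfin (fun z hz => ?_)
    hint.integrableOn).trans
    (setIntegral_le_integral hint (ae_of_all _ fun _ => (Real.exp_pos _).le))
  have : dH x₀ z ^ 4 ≤ ρ ^ 4 := by gcongr; exacts [dH_nonneg _ _, hz]
  exact Real.exp_le_exp.2 (by nlinarith)

lemma exists_integral_exp_lt_of_notMem_suppH [IsFiniteMeasureOnCompacts μ] {x₀ x : Heis n}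
    (hx₀ : x₀ ∈ suppH μ) (hx : x ∉ suppH μ)
    (hint : ∀ y : Heis n, ∀ s : ℝ, 0 < s →
      Integrable (fun z => Real.exp (-s * dH y z ^ 4)) μ) :
    ∃ s > 0,
      ∫ z, Real.exp (-s * dH x z ^ 4) ∂μ < ∫ z, Real.exp (-s * dH x₀ z ^ 4) ∂μ := by
  obtain ⟨r, hr, h₀⟩ := notMem_suppH_iff.1 hx
  set C := ∫ z, Real.exp (-dH x z ^ 4) ∂μ
  set m := (μ (ballH x₀ (r / 2))).toReal
  have hfin : μ (ballH x₀ (r / 2)) ≠ ⊤ := (isCompact_ballH _ _).measure_lt_top.ne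
  have hm : 0 < m := ENNReal.toReal_pos (hx₀ _ (by positivity)).ne' hfin
  have hgrowth : Tendsto (fun s => Real.exp (s * (r ^ 4 - (r / 2) ^ 4))) atTop atTop :=
    Real.tendsto_exp_atTop.comp (tendsto_id.atTop_mul_const (by nlinarith [pow_pos hr 4]))
  obtain ⟨s, hs, hs₁⟩ :=
    ((hgrowth.eventually_gt_atTop (C * Real.exp (r ^ 4) / m)).and
      (eventually_ge_atTop 1)).exists
  rw [div_lt_iff₀ hm] at hs
  refine ⟨s, by linarith, ?_⟩
  calc ∫ z, Real.exp (-s * dH x z ^ 4) ∂μ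
      ≤ Real.exp (-(s - 1) * r ^ 4) * C :=
        integral_exp_le_of_measure_ballH_eq_zero hr.le hs₁ h₀ (by simpa using hint x 1 one_pos)
    _ = C * Real.exp (r ^ 4) * Real.exp (-s * r ^ 4) := by
        rw [mul_comm, mul_assoc, ← Real.exp_add]; ring_nf
    _ < Real.exp (s * (r ^ 4 - (r / 2) ^ 4)) * m * Real.exp (-s * r ^ 4) := by gcongr
    _ = Real.exp (-s * (r / 2) ^ 4) * m := by
        rw [mul_right_comm, ← Real.exp_add]; ring_nf
    _ ≤ ∫ z, Real.exp (-s * dH x₀ z ^ 4) ∂μ :=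
        exp_mul_measure_ballH_le_integral (by linarith) hfin (hint x₀ s (by linarith))

end Separation

end

theorem statement5_general (n : ℕ) (μ : Measure (Heis n)) [μ.Regular]
    (hud : UniformlyDistributed μ)
    (x₀ : Heis n) (hx₀ : x₀ ∈ suppH μ) :
    (∀ x : Heis n, ∀ s : ℝ, 0 < s →
      ∫⁻ z, ENNReal.ofReal (Real.exp (-s * dH x z ^ 4)) ∂μ < ⊤) ∧
    (∀ s : ℝ, 0 < s → ∀ x ∈ suppH μ, ∀ y ∈ suppH μ,
      ∫ z, Real.exp (-s * dH x z ^ 4) ∂μ = ∫ z, Real.exp (-s * dH y z ^ 4) ∂μ) ∧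
    suppH μ = ⋂ (s : ℝ) (_ : 0 < s),
      {x : Heis n |
        ∫ z, (Real.exp (-s * dH x z ^ 4) - Real.exp (-s * dH x₀ z ^ 4)) ∂μ = 0} := by
  have hint := fun y s (hs : 0 < s) => integrable_exp_dH hud hx₀ y hs
  have heq : ∀ s : ℝ, ∀ x ∈ suppH μ, ∀ y ∈ suppH μ,
      ∫ z, Real.exp (-s * dH x z ^ 4) ∂μ = ∫ z, Real.exp (-s * dH y z ^ 4) ∂μ :=
    fun s x hx y hy => integral_comp_dH_eq_of_mem_suppH hud hx hy
      (f := fun t => Real.exp (-s * t ^ 4)) (by fun_prop)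
  refine ⟨fun x s hs => lintegral_exp_lt_top hud hx₀ x hs, fun s _ => heq s, ?_⟩
  ext x
  simp only [mem_iInter, mem_ofPred_eq]
  refine ⟨fun hx s hs => ?_, fun hF => ?_⟩
  · rw [integral_sub (hint x s hs) (hint x₀ s hs), heq s x hx x₀ hx₀, sub_self]
  by_contra hx
  obtain ⟨s, hs, hlt⟩ := exists_integral_exp_lt_of_notMem_suppH hx₀ hx hint
  have hFs := hF s hs
  rw [integral_sub (hint x s hs) (hint x₀ s hs)] at hFs
  linarith

/-- For a nonzero uniformly distributed measure `μ` on `(ℍⁿ, d_H)` with `supp μ ≠ ℍⁿ` and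
`x₀ ∈ supp μ`: the integrals `∫ exp(-s d_H(x,z)⁴) dμ(z)` are finite, they do not depend on
`x ∈ supp μ` (so `F(x,s) = ∫ (exp(-s d_H(x,z)⁴) - exp(-s d_H(x₀,z)⁴)) dμ(z)` is well
defined), and `supp μ = ⋂_{s>0} {x : F(x,s) = 0}`. -/
theorem statement5 (n : ℕ) (μ : Measure (Heis n)) [μ.Regular] (hμ : μ ≠ 0)
    (hud : UniformlyDistributed μ) (hns : suppH μ ≠ Set.univ)
    (x₀ : Heis n) (hx₀ : x₀ ∈ suppH μ) :
    (∀ x : Heis n, ∀ s : ℝ, 0 < s →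
      ∫⁻ z, ENNReal.ofReal (Real.exp (-s * dH x z ^ 4)) ∂μ < ⊤) ∧
    (∀ s : ℝ, 0 < s → ∀ x ∈ suppH μ, ∀ y ∈ suppH μ,
      ∫ z, Real.exp (-s * dH x z ^ 4) ∂μ = ∫ z, Real.exp (-s * dH y z ^ 4) ∂μ) ∧
    suppH μ = ⋂ (s : ℝ) (_ : 0 < s),
      {x : Heis n |
        ∫ z, (Real.exp (-s * dH x z ^ 4) - Real.exp (-s * dH x₀ z ^ 4)) ∂μ = 0} :=
  statement5_general n μ hud x₀ hx₀
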